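/- arXiv:2203.02943 — 2 statements merged into one kernel-verified Lean document; each statement's English description precedes it below -/
import Mathlib

section
/- Let H ∈ (0,1/2) and α ∈ (−1/2−H, 1/2−H). Then ∫₀^∞ u^α |u^{H−1/2} − (u−1)_+^{H−1/2}| du < ∞, where (x)_+^β = x^β for x > 0 and 0 otherwise. -/
open MeasureTheory Real Set

/-!
Write `p = H - 1/2 ∈ (-1, 0)`. On `(0, 1]` the integrand is `u ^ (α + p)`, integrable since
`-1 < α + p`; on `(1, 2]` it is a continuous function times `|u ^ p - (u - 1) ^ p|`, integrable
since `-1 < p`; for `u ≥ 2` the mean value theorem bounds it by a multiple of `u ^ (α + p - 1)`,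
integrable at infinity since `α + p < 0`.
-/

/-- Truncated power: `(x)_+^β = x^β` if `x > 0`, else `0`. -/
noncomputable def posPow (x β : ℝ) : ℝ := if 0 < x then x ^ β else 0

lemma posPow_of_pos {x : ℝ} (β : ℝ) (hx : 0 < x) : posPow x β = x ^ β := if_pos hx

lemma posPow_of_nonpos {x : ℝ} (β : ℝ) (hx : x ≤ 0) : posPow x β = 0 := if_neg hx.not_gt

@[fun_prop]
lemma measurable_posPow (β : ℝ) : Measurable fun x => posPow x β :=
  Measurable.ite measurableSet_Ioi (by fun_prop) measurable_const

lemma abs_rpow_sub_rpow_le {p x y : ℝ} (hp : p ≤ 1) (hx : 0 < x) (hxy : x ≤ y) :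
    |y ^ p - x ^ p| ≤ |p| * x ^ (p - 1) * (y - x) := by
  have hderiv : ∀ c ∈ Ici x, HasDerivWithinAt (fun t => t ^ p) (p * c ^ (p - 1)) (Ici x) c :=
    fun c hc => (hasDerivAt_rpow_const (Or.inl (hx.trans_le hc).ne')).hasDerivWithinAt
  have hbound : ∀ c ∈ Ici x, ‖p * c ^ (p - 1)‖ ≤ |p| * x ^ (p - 1) := fun c hc => by
    rw [norm_mul, norm_eq_abs, norm_of_nonneg (rpow_nonneg (hx.le.trans hc) _)]
    exact mul_le_mul_of_nonneg_left (rpow_le_rpow_of_nonpos hx hc (by linarith)) (abs_nonneg p)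
  simpa [abs_of_nonneg (sub_nonneg.2 hxy)] using
    (convex_Ici x).norm_image_sub_le_of_norm_hasDerivWithin_le hderiv hbound self_mem_Ici hxy

lemma rpow_sub_one_le_of_two_le {q u : ℝ} (hq : q ≤ 0) (hu : 2 ≤ u) :
    (u - 1) ^ q ≤ 2 ^ (-q) * u ^ q :=
  calc (u - 1) ^ q ≤ (u / 2) ^ q := rpow_le_rpow_of_nonpos (by positivity) (by linarith) hq
    _ = 2 ^ (-q) * u ^ q := by
      rw [div_rpow (by positivity) zero_le_two, rpow_neg zero_le_two]; ring

noncomputable def powDiffKernel (α p u : ℝ) : ℝ := u ^ α * |u ^ p - posPow (u - 1) p|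

section

variable (α p : ℝ)

@[fun_prop]
lemma measurable_powDiffKernel : Measurable (powDiffKernel α p) := by
  unfold powDiffKernel; fun_prop

variable {α p}

lemma powDiffKernel_nonneg {u : ℝ} (hu : 0 ≤ u) : 0 ≤ powDiffKernel α p u :=
  mul_nonneg (rpow_nonneg hu α) (abs_nonneg _)

lemma integrableOn_Ioc_zero_one_powDiffKernel (hαp : -1 < α + p) :
    IntegrableOn (powDiffKernel α p) (Ioc 0 1) := by
  have h : IntegrableOn (fun u : ℝ => u ^ (α + p)) (Ioc 0 1) :=
    (intervalIntegrable_iff_integrableOn_Ioc_of_le zero_le_one).1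
      (intervalIntegral.intervalIntegrable_rpow' hαp)
  refine h.congr_fun (fun u hu => ?_) measurableSet_Ioc
  beta_reduce
  rw [powDiffKernel, rpow_add hu.1, posPow_of_nonpos p (by linarith [hu.2]), sub_zero,
    abs_of_nonneg (rpow_nonneg hu.1.le p)]

lemma integrableOn_Ioc_one_two_powDiffKernel (hp : -1 < p) :
    IntegrableOn (powDiffKernel α p) (Ioc 1 2) := by
  have hne : ∀ u ∈ Icc (1 : ℝ) 2, u ≠ 0 := fun u hu => by linarith [hu.1]
  have hshift : IntegrableOn (fun u => posPow (u - 1) p) (Ioc 1 2) := by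
    have h := (intervalIntegral.intervalIntegrable_rpow' hp (a := 0) (b := 1)).comp_sub_right 1
    rw [zero_add, one_add_one_eq_two,
      intervalIntegrable_iff_integrableOn_Ioc_of_le one_le_two] at h
    exact h.congr_fun (fun u hu => (posPow_of_pos p (by linarith [hu.1])).symm) measurableSet_Ioc
  have hdiff : IntegrableOn (fun u => |u ^ p - posPow (u - 1) p|) (Ioc 1 2) :=
    ((((continuousOn_id.rpow_const fun u hu => Or.inl (hne u hu)).integrableOn_compact
      isCompact_Icc).mono_set Ioc_subset_Icc_self).sub hshift).abs
  exact hdiff.continuousOn_mul_of_subset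
    (continuousOn_id.rpow_const fun u hu => Or.inl (hne u hu)) isCompact_Icc measurableSet_Ioc
    Ioc_subset_Icc_self

lemma powDiffKernel_le_of_two_le (hp : p ≤ 1) {u : ℝ} (hu : 2 ≤ u) :
    powDiffKernel α p u ≤ |p| * 2 ^ (1 - p) * u ^ (α + p - 1) := by
  have hu0 : 0 < u := by linarith
  have hmvt : |u ^ p - (u - 1) ^ p| ≤ |p| * (u - 1) ^ (p - 1) := by
    simpa using abs_rpow_sub_rpow_le hp (by linarith : (0 : ℝ) < u - 1) (sub_le_self u zero_le_one)
  have hshift : (u - 1) ^ (p - 1) ≤ 2 ^ (1 - p) * u ^ (p - 1) := by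
    simpa using rpow_sub_one_le_of_two_le (q := p - 1) (by linarith) hu
  calc powDiffKernel α p u = u ^ α * |u ^ p - (u - 1) ^ p| := by
        rw [powDiffKernel, posPow_of_pos p (by linarith)]
    _ ≤ u ^ α * (|p| * (2 ^ (1 - p) * u ^ (p - 1))) := by
        gcongr
        exact hmvt.trans (mul_le_mul_of_nonneg_left hshift (abs_nonneg p))
    _ = |p| * 2 ^ (1 - p) * u ^ (α + p - 1) := by
        rw [add_sub_assoc, rpow_add hu0]; ring

lemma integrableOn_Ioi_two_powDiffKernel (hp : p ≤ 1) (hαp : α + p < 0) :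
    IntegrableOn (powDiffKernel α p) (Ioi 2) := by
  have hbound : IntegrableOn (fun u => |p| * 2 ^ (1 - p) * u ^ (α + p - 1)) (Ioi 2) :=
    (integrableOn_Ioi_rpow_of_lt (by linarith) two_pos).const_mul _
  refine hbound.mono' (measurable_powDiffKernel α p).aestronglyMeasurable <|
    (ae_restrict_iff' measurableSet_Ioi).2 (Filter.Eventually.of_forall fun u (hu : 2 < u) => ?_)
  rw [norm_of_nonneg (powDiffKernel_nonneg (by linarith))]
  exact powDiffKernel_le_of_two_le hp hu.le

end

/-- For `H ∈ (0,1/2)` and `α ∈ (-1/2-H, 1/2-H)`,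
`∫₀^∞ u^α |u^{H-1/2} - (u-1)_+^{H-1/2}| du < ∞`. -/
theorem integral_on_halfline_finite (H α : ℝ) (hH : H ∈ Ioo (0 : ℝ) (1/2))
    (hα : α ∈ Ioo (-(1/2) - H) (1/2 - H)) :
    (∫⁻ u in Ioi (0 : ℝ),
        ENNReal.ofReal (u ^ α * |u ^ (H - 1/2) - posPow (u - 1) (H - 1/2)|)) < ⊤ := by
  obtain ⟨hH₀, hH₁⟩ := hH
  obtain ⟨hα₀, hα₁⟩ := hα
  have hnear : IntegrableOn (powDiffKernel α (H - 1/2)) (Ioc 0 2) := by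
    rw [← Ioc_union_Ioc_eq_Ioc zero_le_one one_le_two]
    exact (integrableOn_Ioc_zero_one_powDiffKernel (by linarith)).union
      (integrableOn_Ioc_one_two_powDiffKernel (by linarith))
  have h := hnear.union (integrableOn_Ioi_two_powDiffKernel (by linarith) (by linarith))
  rw [Ioc_union_Ioi_eq_Ioi zero_le_two] at h
  exact h.setLIntegral_lt_top
end

section
/- Let H ∈ (0,1/2). There exists a constant C > 0 such that for every positive integer n, ∫₀¹ ∫₀ᵗ |k_n(s,t)| ds dt ≤ C · n^{−H−1/2}, where k_n(s,t) = (t−s)^{H−1/2} − (⌊nt⌋/n − s)_+^{H−1/2}. -/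
open MeasureTheory Real Set

/-- The discretization kernel `k_n(s,t) = (t-s)^{H-1/2} - (⌊nt⌋/n - s)_+^{H-1/2}`. -/
noncomputable def kn (H : ℝ) (n : ℕ) (s t : ℝ) : ℝ :=
  (t - s) ^ (H - 1/2) - posPow ((⌊(n : ℝ) * t⌋ : ℝ) / n - s) (H - 1/2)

/-!
For `s` below the grid point `u = ⌊nt⌋/n` the kernel is `(u - s)^p - (t - s)^p ≥ 0` with
`p = H - 1/2 ≤ 0`, and above it the kernel is `(t - s)^p`. Both pieces integrate in closed form;
the first is at most `(t - u)^{p+1}/(p+1)` because `u^{p+1} ≤ t^{p+1}`, and the second equals it.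
Hence the inner integral is at most `2 (t - u)^{p+1}/(p+1) ≤ 2 n^{-(H+1/2)}/(H+1/2)`,
uniformly in `t`.
-/

lemma setLIntegral_Ioc_ofReal_eq_intervalIntegral {f : ℝ → ℝ} {a b : ℝ} (hab : a ≤ b)
    (hf : IntegrableOn f (Ioc a b)) (hf_nonneg : ∀ x ∈ Ioo a b, 0 ≤ f x) :
    ∫⁻ s in Ioc a b, ENNReal.ofReal (f s) = ENNReal.ofReal (∫ s in a..b, f s) := by
  rw [intervalIntegral.integral_of_le hab, integral_Ioc_eq_integral_Ioo,
    ← setLIntegral_congr Ioo_ae_eq_Ioc,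
    ← ofReal_integral_eq_lintegral_ofReal (hf.mono_set Ioo_subset_Ioc_self)
      (ae_restrict_of_forall_mem measurableSet_Ioo hf_nonneg)]

section RpowOfSub

variable {p : ℝ}

lemma intervalIntegrable_sub_rpow (hp : -1 < p) (c a b : ℝ) :
    IntervalIntegrable (fun s => (c - s) ^ p) volume a b := by
  simpa using
    (intervalIntegral.intervalIntegrable_rpow' (a := c - a) (b := c - b) hp).comp_sub_left c

lemma integrableOn_Ioc_sub_rpow (hp : -1 < p) (c : ℝ) {a b : ℝ} (hab : a ≤ b) :
    IntegrableOn (fun s => (c - s) ^ p) (Ioc a b) :=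
  (intervalIntegrable_iff_integrableOn_Ioc_of_le hab).mp (intervalIntegrable_sub_rpow hp c a b)

lemma integral_sub_rpow (hp : -1 < p) (c a b : ℝ) :
    ∫ s in a..b, (c - s) ^ p = ((c - a) ^ (p + 1) - (c - b) ^ (p + 1)) / (p + 1) := by
  rw [intervalIntegral.integral_comp_sub_left (fun x => x ^ p) c, integral_rpow (Or.inl hp)]

variable {u t : ℝ}

lemma setLIntegral_Ioc_sub_rpow (hp : -1 < p) (hut : u ≤ t) :
    ∫⁻ s in Ioc u t, ENNReal.ofReal ((t - s) ^ p)
      = ENNReal.ofReal ((t - u) ^ (p + 1) / (p + 1)) := by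
  rw [setLIntegral_Ioc_ofReal_eq_intervalIntegral hut (integrableOn_Ioc_sub_rpow hp t hut)
      (fun s hs => rpow_nonneg (by linarith [hs.2]) p),
    integral_sub_rpow hp, sub_self, zero_rpow (by linarith), sub_zero]

lemma setLIntegral_Ioc_sub_rpow_sub_sub_rpow (hp : -1 < p) (hp0 : p ≤ 0) (hu : 0 ≤ u)
    (hut : u ≤ t) :
    ∫⁻ s in Ioc 0 u, ENNReal.ofReal ((u - s) ^ p - (t - s) ^ p)
      = ENNReal.ofReal ((u ^ (p + 1) - t ^ (p + 1) + (t - u) ^ (p + 1)) / (p + 1)) := by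
  have hnonneg : ∀ s ∈ Ioo 0 u, 0 ≤ (u - s) ^ p - (t - s) ^ p := fun s hs =>
    sub_nonneg.mpr (rpow_le_rpow_of_nonpos (by linarith [hs.2]) (by linarith) hp0)
  have hint : IntegrableOn (fun s => (u - s) ^ p - (t - s) ^ p) (Ioc 0 u) :=
    (integrableOn_Ioc_sub_rpow hp u hu).sub (integrableOn_Ioc_sub_rpow hp t hu)
  rw [setLIntegral_Ioc_ofReal_eq_intervalIntegral hu hint hnonneg,
    intervalIntegral.integral_sub (intervalIntegrable_sub_rpow hp u 0 u)
      (intervalIntegrable_sub_rpow hp t 0 u),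
    integral_sub_rpow hp, integral_sub_rpow hp, sub_self, zero_rpow (by linarith)]
  ring_nf

lemma setLIntegral_abs_sub_rpow_sub_posPow_le (hp : -1 < p) (hp0 : p ≤ 0) (hu : 0 ≤ u)
    (hut : u ≤ t) :
    ∫⁻ s in Ioc 0 t, ENNReal.ofReal |(t - s) ^ p - posPow (u - s) p|
      ≤ ENNReal.ofReal (2 * (t - u) ^ (p + 1) / (p + 1)) := by
  have below : ∀ s ∈ Ioo 0 u,
      |(t - s) ^ p - posPow (u - s) p| = (u - s) ^ p - (t - s) ^ p := fun s hs => by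
    have hus : 0 < u - s := by linarith [hs.2]
    rw [posPow, if_pos hus, abs_sub_comm,
      abs_of_nonneg (sub_nonneg.mpr (rpow_le_rpow_of_nonpos hus (by linarith) hp0))]
  have above : ∀ s ∈ Ioc u t, |(t - s) ^ p - posPow (u - s) p| = (t - s) ^ p := fun s hs => by
    rw [posPow, if_neg (by linarith [hs.1]), sub_zero,
      abs_of_nonneg (rpow_nonneg (by linarith [hs.2]) p)]
  have hpow : u ^ (p + 1) ≤ t ^ (p + 1) := rpow_le_rpow hu hut (by linarith)
  have hpos : 0 ≤ (t - u) ^ (p + 1) / (p + 1) :=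
    div_nonneg (rpow_nonneg (by linarith) _) (by linarith)
  calc ∫⁻ s in Ioc 0 t, ENNReal.ofReal |(t - s) ^ p - posPow (u - s) p|
      = (∫⁻ s in Ioo 0 u, ENNReal.ofReal |(t - s) ^ p - posPow (u - s) p|)
        + ∫⁻ s in Ioc u t, ENNReal.ofReal |(t - s) ^ p - posPow (u - s) p| := by
        rw [← Ioc_union_Ioc_eq_Ioc hu hut, lintegral_union measurableSet_Ioc
          (Ioc_disjoint_Ioc_of_le le_rfl), setLIntegral_congr Ioo_ae_eq_Ioc]
    _ = ENNReal.ofReal ((u ^ (p + 1) - t ^ (p + 1) + (t - u) ^ (p + 1)) / (p + 1))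
        + ENNReal.ofReal ((t - u) ^ (p + 1) / (p + 1)) := by
        rw [setLIntegral_congr_fun measurableSet_Ioo
            fun s hs => congrArg ENNReal.ofReal (below s hs),
          setLIntegral_congr Ioo_ae_eq_Ioc,
          setLIntegral_congr_fun measurableSet_Ioc
            fun s hs => congrArg ENNReal.ofReal (above s hs),
          setLIntegral_Ioc_sub_rpow_sub_sub_rpow hp hp0 hu hut, setLIntegral_Ioc_sub_rpow hp hut]
    _ ≤ ENNReal.ofReal ((t - u) ^ (p + 1) / (p + 1))
        + ENNReal.ofReal ((t - u) ^ (p + 1) / (p + 1)) := by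
        gcongr ENNReal.ofReal ?_ + _
        exact div_le_div_of_nonneg_right (by linarith) (by linarith)
    _ = ENNReal.ofReal (2 * (t - u) ^ (p + 1) / (p + 1)) := by
        rw [← ENNReal.ofReal_add hpos hpos]
        ring_nf

end RpowOfSub

section GridPoint

variable {n : ℕ}

lemma floor_mul_div_nonneg {t : ℝ} (ht : 0 ≤ t) : 0 ≤ (⌊(n : ℝ) * t⌋ : ℝ) / n :=
  div_nonneg (mod_cast Int.floor_nonneg.mpr (by positivity)) n.cast_nonneg

lemma floor_mul_div_le (hn : 0 < n) (t : ℝ) : (⌊(n : ℝ) * t⌋ : ℝ) / n ≤ t := by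
  rw [div_le_iff₀ (by positivity), mul_comm]
  exact Int.floor_le _

lemma sub_floor_mul_div_le (hn : 0 < n) (t : ℝ) :
    t - (⌊(n : ℝ) * t⌋ : ℝ) / n ≤ 1 / n := by
  rw [sub_le_iff_le_add, ← add_div, le_div_iff₀ (by positivity), mul_comm]
  linarith [Int.lt_floor_add_one ((n : ℝ) * t)]

end GridPoint

lemma setLIntegral_abs_kn_le {H : ℝ} (hH : H ∈ Ioo (0 : ℝ) (1/2)) {n : ℕ} (hn : 0 < n)
    {t : ℝ} (ht : 0 ≤ t) :
    ∫⁻ s in Ioc 0 t, ENNReal.ofReal |kn H n s t|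
      ≤ ENNReal.ofReal (2 / (H + 1/2) * (n : ℝ) ^ (-H - 1/2)) := by
  obtain ⟨hH0, hH1⟩ := hH
  set u := (⌊(n : ℝ) * t⌋ : ℝ) / n
  have hgap : (t - u) ^ (H + 1/2) ≤ (n : ℝ) ^ (-H - 1/2) := by
    calc (t - u) ^ (H + 1/2) ≤ (1 / n) ^ (H + 1/2) :=
          rpow_le_rpow (by linarith [floor_mul_div_le hn t]) (sub_floor_mul_div_le hn t)
            (by linarith)
      _ = (n : ℝ) ^ (-H - 1/2) := by
          rw [one_div, inv_rpow n.cast_nonneg, ← rpow_neg n.cast_nonneg]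
          ring_nf
  calc ∫⁻ s in Ioc 0 t, ENNReal.ofReal |kn H n s t|
      ≤ ENNReal.ofReal (2 * (t - u) ^ (H - 1/2 + 1) / (H - 1/2 + 1)) :=
        setLIntegral_abs_sub_rpow_sub_posPow_le (by linarith) (by linarith)
          (floor_mul_div_nonneg ht) (floor_mul_div_le hn t)
    _ ≤ ENNReal.ofReal (2 / (H + 1/2) * (n : ℝ) ^ (-H - 1/2)) := by
        gcongr
        rw [show H - 1/2 + 1 = H + 1/2 by ring, mul_div_right_comm]
        gcongr

/-- `∫₀¹∫₀ᵗ |k_n(s,t)| ds dt ≤ C n^{-H-1/2}` (Lemma 1 with `α = 0`). -/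
theorem kernel_L1_bound (H : ℝ) (hH : H ∈ Ioo (0 : ℝ) (1/2)) :
    ∃ C : ℝ, 0 < C ∧ ∀ n : ℕ, 0 < n →
      (∫⁻ t in Ioc (0 : ℝ) 1, ∫⁻ s in Ioc (0 : ℝ) t, ENNReal.ofReal |kn H n s t|)
        ≤ ENNReal.ofReal (C * (n : ℝ) ^ (-H - 1/2)) := by
  refine ⟨2 / (H + 1/2), div_pos two_pos (by linarith [hH.1]), fun n hn => ?_⟩
  calc (∫⁻ t in Ioc (0 : ℝ) 1, ∫⁻ s in Ioc (0 : ℝ) t, ENNReal.ofReal |kn H n s t|)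
      ≤ ∫⁻ _ in Ioc (0 : ℝ) 1, ENNReal.ofReal (2 / (H + 1/2) * (n : ℝ) ^ (-H - 1/2)) :=
        setLIntegral_mono' measurableSet_Ioc fun t ht => setLIntegral_abs_kn_le hH hn ht.1.le
    _ = ENNReal.ofReal (2 / (H + 1/2) * (n : ℝ) ^ (-H - 1/2)) := by
        simp [Real.volume_Ioc]
end
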